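/- arXiv:1405.7173 — 2 statements merged into one kernel-verified Lean document; each statement's English description precedes it below -/
import Mathlib

section
/- Let a, b ∈ [0,1] with a ≠ b, and define for θ ∈ [0,1] the mixture m(θ) = θ·a + (1−θ)·b. Then the function Q(θ) = θ·g(m₁(θ)) + (1−θ)·g(m₂(θ)), where g(p) = p·log p + (1−p)·log(1−p) (with the convention 0·log 0 = 0), specialized to the two-segment setting where m₁(θ) and m₂(θ) are the pre- and post-split mixture fractions of a two-distribution sequence with true split q₁ ∈ (0,1), satisfies: Q is nondecreasing on (0, q₁] and nonincreasing on [q₁, 1), so Q attains its maximum on (0,1) at θ = q₁. -/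
/-!
On `(0, q₁]` the first segment is pure, `F₁ = a`, while `F₂` is the mean of `a` and `b` with
weights `q₁ - θ` and `1 - q₁`. Moving the split from `θ` up to `θ' ≤ q₁` only moves mass
`θ' - θ` of pure `a` from the second segment into the first, and Jensen's inequality for the
convex function `g = -binEntropy` gives
`(1 - θ) g(F₂(θ)) ≤ (θ' - θ) g(a) + (1 - θ') g(F₂(θ'))`, i.e. `Q(θ) ≤ Q(θ')`.
The map `θ ↦ 1 - θ` together with swapping `a` and `b` exchanges the two segments, which turns
the monotonicity on `(0, q₁]` into the antitonicity on `[q₁, 1)`.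
-/

noncomputable def g (p : ℝ) : ℝ := p * Real.log p + (1 - p) * Real.log (1 - p)

/-- Pre-split mixture fraction. -/
noncomputable def F1mix (q₁ a b θ : ℝ) : ℝ :=
  (min q₁ θ * a + max (θ - q₁) 0 * b) / (min q₁ θ + max (θ - q₁) 0)

/-- Post-split mixture fraction. -/
noncomputable def F2mix (q₁ a b θ : ℝ) : ℝ :=
  (max (q₁ - θ) 0 * a + min (1 - θ) (1 - q₁) * b) /
    (max (q₁ - θ) 0 + min (1 - θ) (1 - q₁))

noncomputable def Qfun (q₁ a b θ : ℝ) : ℝ :=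
  θ * g (F1mix q₁ a b θ) + (1 - θ) * g (F2mix q₁ a b θ)

open Set

noncomputable def weightedMean (u v x y : ℝ) : ℝ := (u * x + v * y) / (u + v)

lemma weightedMean_eq_div_smul (u v x y : ℝ) :
    weightedMean u v x y = (u / (u + v)) • x + (v / (u + v)) • y := by
  simp only [weightedMean, smul_eq_mul]
  ring

lemma weightedMean_add_left (u u' v x y : ℝ) (h : u' + v ≠ 0) :
    weightedMean (u + u') v x y = weightedMean u (u' + v) x (weightedMean u' v x y) := by
  simp only [weightedMean]
  rw [mul_div_cancel₀ _ h]
  ring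

lemma Convex.weightedMean_mem {s : Set ℝ} (hs : Convex ℝ s) {u v x y : ℝ} (hx : x ∈ s)
    (hy : y ∈ s) (hu : 0 ≤ u) (hv : 0 ≤ v) (huv : 0 < u + v) : weightedMean u v x y ∈ s := by
  rw [weightedMean_eq_div_smul]
  exact convex_iff_div.mp hs hx hy hu hv huv

lemma ConvexOn.mul_map_weightedMean_le {s : Set ℝ} {f : ℝ → ℝ} (hf : ConvexOn ℝ s f)
    {u v x y : ℝ} (hx : x ∈ s) (hy : y ∈ s) (hu : 0 ≤ u) (hv : 0 ≤ v) (huv : 0 < u + v) :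
    (u + v) * f (weightedMean u v x y) ≤ u * f x + v * f y := by
  have hjensen := (convexOn_iff_div.mp hf).2 hx hy hu hv huv
  rw [← weightedMean_eq_div_smul, smul_eq_mul, smul_eq_mul] at hjensen
  calc (u + v) * f (weightedMean u v x y)
      ≤ (u + v) * (u / (u + v) * f x + v / (u + v) * f y) :=
        mul_le_mul_of_nonneg_left hjensen huv.le
    _ = u * f x + v * f y := by field_simp

lemma g_eq_neg_binEntropy : g = -Real.binEntropy := by
  funext p
  simp only [g, Pi.neg_apply, Real.binEntropy, Real.log_inv]
  ring

lemma convexOn_g : ConvexOn ℝ (Icc 0 1) g := by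
  rw [g_eq_neg_binEntropy]
  exact Real.strictConcave_binEntropy.concaveOn.neg

lemma Qfun_of_le {q₁ a b θ : ℝ} (h₀ : 0 < θ) (hθ : θ ≤ q₁) :
    Qfun q₁ a b θ = θ * g a + (1 - θ) * g (weightedMean (q₁ - θ) (1 - q₁) a b) := by
  have hF₁ : F1mix q₁ a b θ = a := by
    rw [F1mix, min_eq_right hθ, max_eq_right (by linarith), zero_mul, add_zero, add_zero,
      mul_div_cancel_left₀ a h₀.ne']
  have hF₂ : F2mix q₁ a b θ = weightedMean (q₁ - θ) (1 - q₁) a b := by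
    rw [F2mix, max_eq_left (by linarith), min_eq_right (by linarith), weightedMean]
  rw [Qfun, hF₁, hF₂]

lemma Qfun_one_sub_one_sub (q₁ a b θ : ℝ) : Qfun (1 - q₁) b a (1 - θ) = Qfun q₁ a b θ := by
  simp only [Qfun, F1mix, F2mix, sub_sub_cancel, sub_sub_sub_cancel_left, min_comm θ q₁,
    min_comm (1 - q₁) (1 - θ)]
  ring_nf

lemma Qfun_monotoneOn {q₁ a b : ℝ} (ha : a ∈ Icc 0 1) (hb : b ∈ Icc 0 1) (hq : q₁ < 1) :
    MonotoneOn (Qfun q₁ a b) (Ioc 0 q₁) := by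
  rintro θ ⟨hθ₀, hθq⟩ θ' ⟨hθ'₀, hθ'q⟩ hle
  set m := weightedMean (q₁ - θ') (1 - q₁) a b
  have hm : m ∈ Icc 0 1 :=
    (convex_Icc 0 1).weightedMean_mem ha hb (by linarith) (by linarith) (by linarith)
  have hsplit : weightedMean (q₁ - θ) (1 - q₁) a b = weightedMean (θ' - θ) (1 - θ') a m := by
    rw [show q₁ - θ = (θ' - θ) + (q₁ - θ') by ring,
      weightedMean_add_left _ _ _ _ _ (by linarith), show q₁ - θ' + (1 - q₁) = 1 - θ' by ring]
  have hjensen := convexOn_g.mul_map_weightedMean_le (u := θ' - θ) (v := 1 - θ') ha hm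
    (by linarith) (by linarith) (by linarith)
  rw [Qfun_of_le hθ₀ hθq, Qfun_of_le hθ'₀ hθ'q, hsplit]
  rw [show θ' - θ + (1 - θ') = 1 - θ by ring] at hjensen
  linarith

lemma Qfun_antitoneOn {q₁ a b : ℝ} (ha : a ∈ Icc 0 1) (hb : b ∈ Icc 0 1) (hq : 0 < q₁) :
    AntitoneOn (Qfun q₁ a b) (Ico q₁ 1) := by
  rintro θ ⟨hqθ, hθ₁⟩ θ' ⟨hqθ', hθ'₁⟩ hle
  rw [← Qfun_one_sub_one_sub q₁ a b θ, ← Qfun_one_sub_one_sub q₁ a b θ']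
  exact Qfun_monotoneOn hb ha (by linarith) ⟨by linarith, by linarith⟩ ⟨by linarith, by linarith⟩
    (by linarith)

theorem Q_max_at_true_split_general (a b q₁ : ℝ)
    (ha : a ∈ Set.Ioo (0:ℝ) 1) (hb : b ∈ Set.Ioo (0:ℝ) 1)
    (hq : q₁ ∈ Set.Ioo (0:ℝ) 1) :
    MonotoneOn (Qfun q₁ a b) (Set.Ioc (0:ℝ) q₁) ∧
      AntitoneOn (Qfun q₁ a b) (Set.Ico q₁ (1:ℝ)) ∧
      ∀ θ ∈ Set.Ioo (0:ℝ) 1, Qfun q₁ a b θ ≤ Qfun q₁ a b q₁ := by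
  have hmono := Qfun_monotoneOn (Ioo_subset_Icc_self ha) (Ioo_subset_Icc_self hb) hq.2
  have hanti := Qfun_antitoneOn (Ioo_subset_Icc_self ha) (Ioo_subset_Icc_self hb) hq.1
  refine ⟨hmono, hanti, fun θ hθ => ?_⟩
  rcases le_total θ q₁ with h | h
  · exact hmono ⟨hθ.1, h⟩ ⟨hq.1, le_rfl⟩ h
  · exact hanti ⟨le_rfl, hq.2⟩ ⟨h, hθ.2⟩ h

/-- The population objective `Q` is nondecreasing on `(0, q₁]`, nonincreasing on
`[q₁, 1)`, hence attains its maximum over `(0,1)` at the true split `q₁`. -/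
theorem Q_max_at_true_split (a b q₁ : ℝ)
    (ha : a ∈ Set.Ioo (0:ℝ) 1) (hb : b ∈ Set.Ioo (0:ℝ) 1) (hab : a ≠ b)
    (hq : q₁ ∈ Set.Ioo (0:ℝ) 1) :
    MonotoneOn (Qfun q₁ a b) (Set.Ioc (0:ℝ) q₁) ∧
      AntitoneOn (Qfun q₁ a b) (Set.Ico q₁ (1:ℝ)) ∧
      ∀ θ ∈ Set.Ioo (0:ℝ) 1, Qfun q₁ a b θ ≤ Qfun q₁ a b q₁ :=
  Q_max_at_true_split_general a b q₁ ha hb hq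
end

section
/- Wellner's inequality (i): Let G_n be the empirical distribution function of n i.i.d. Uniform(0,1) random variables. For all λ ≥ 1 and 0 < a ≤ 1, Pr( sup_{a ≤ u ≤ 1} G_n(u)/u ≥ λ ) ≤ exp(−n·a·h(λ)), where h(x) = x(log x − 1) + 1. -/
open MeasureTheory ProbabilityTheory

noncomputable def hfun (x : ℝ) : ℝ := x * (Real.log x - 1) + 1

/-- Empirical distribution function of `U₁,…,Uₙ`. -/
noncomputable def empCDF (n : ℕ) (U : Fin n → ℝ) (u : ℝ) : ℝ :=
  (Finset.univ.filter (fun i => U i ≤ u)).card / n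

/-!
Write `c = λn` and `t_k = max(a, k / c)`. On the event, let `A` be the set of points below the
last time `τ ∈ [a, 1]` at which the counting function `n G_n` meets the line `u ↦ c u`; then
`#A = k ≥ c a`, `τ = t_k`, and the points outside `A` lie above `τ` and keep the count strictly
below the line afterwards, an event `F_A` depending only on the coordinates outside `A`.
Moving the points of any `J ⊆ A` down to `a` does not change this description, so for fixed `J`
the events `{U_i ≤ t_#A for i ∈ A \ J} ∩ F_A` are disjoint, i.e.
`∑_{A ⊇ J} t_#A ^ #(A \ J) P(F_A) ≤ 1`. With `β = a(λ - 1)` one has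
`t_k ^ k ≤ λ^(-c a) (t_k + β) ^ k`; expanding `(t + β) ^ #A` over the subsets `J ⊆ A` then gives
`P ≤ ∑_A t_#A ^ #A P(F_A) ≤ λ^(-c a) (1 + β) ^ n ≤ exp(-n a h(λ))`.
-/

open Finset

namespace Wellner

variable {ι : Type*}

noncomputable def countLE (s : Finset ι) (x : ι → ℝ) (u : ℝ) : ℕ := #{i ∈ s | x i ≤ u}

section countLE

variable {s t : Finset ι} {x y : ι → ℝ} {u : ℝ}

theorem countLE_mono (s : Finset ι) (x : ι → ℝ) : Monotone (countLE s x) :=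
  fun _ _ huv => card_le_card <| monotone_filter_right _ fun _ _ hi => hi.trans huv

theorem countLE_le_card : countLE s x u ≤ #s := card_filter_le _ _

theorem countLE_eq_card (h : ∀ i ∈ s, x i ≤ u) : countLE s x u = #s :=
  congr_arg card (filter_true_of_mem h)

theorem countLE_congr (h : ∀ i ∈ s, x i = y i) : countLE s x u = countLE s y u :=
  congr_arg card (filter_congr fun i hi => by rw [h i hi])

theorem countLE_union [DecidableEq ι] (hst : Disjoint s t) :
    countLE (s ∪ t) x u = countLE s x u + countLE t x u := by
  rw [countLE, filter_union, card_union_of_disjoint (disjoint_filter_filter hst)]; rfl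

theorem countLE_eq_countLE_of_isMaxOn {i : ι} (hi : i ∈ {j ∈ s | x j ≤ u})
    (hmax : ∀ j ∈ {j ∈ s | x j ≤ u}, x j ≤ x i) : countLE s x (x i) = countLE s x u := by
  refine le_antisymm (countLE_mono s x (mem_filter.1 hi).2) (card_le_card fun j hj => ?_)
  exact mem_filter.2 ⟨(mem_filter.1 hj).1, hmax j hj⟩

theorem forall_add_countLE_lt_mul_iff {c t : ℝ} {k : ℕ} (hc : 0 < c) (hk : (k : ℝ) ≤ c * t)
    (hs : ∀ i ∈ s, t < x i) :
    (∀ u, t < u → u ≤ 1 → ((k + countLE s x u : ℕ) : ℝ) < c * u) ↔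
      ∀ i ∈ s, x i ≤ 1 → ((k + countLE s x (x i) : ℕ) : ℝ) < c * x i := by
  refine ⟨fun h i hi => h _ (hs i hi), fun h u htu hu1 => ?_⟩
  -- the count at `u` equals the count at the largest jump below `u`, while the line has grown
  obtain hempty | hne := {j ∈ s | x j ≤ u}.eq_empty_or_nonempty
  · have : countLE s x u = 0 := card_eq_zero.2 hempty
    rw [this, add_zero]
    exact hk.trans_lt (by gcongr)
  · obtain ⟨i, hi, hmax⟩ := exists_max_image _ x hne
    rw [← countLE_eq_countLE_of_isMaxOn hi hmax]
    obtain ⟨his, hiu⟩ := mem_filter.1 hi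
    exact (h i his (hiu.trans hu1)).trans_le (by gcongr)

end countLE

noncomputable def levelTime (c a : ℝ) (k : ℕ) : ℝ := max a (k / c)

section levelTime

variable {c a : ℝ} {k : ℕ}

theorem le_levelTime : a ≤ levelTime c a k := le_max_left _ _

theorem levelTime_le_one (hc : 0 < c) (ha1 : a ≤ 1) (hk : (k : ℝ) ≤ c) : levelTime c a k ≤ 1 :=
  max_le ha1 ((div_le_one hc).2 hk)

theorem natCast_le_mul_levelTime (hc : 0 < c) : (k : ℝ) ≤ c * levelTime c a k := by
  rw [← div_le_iff₀' hc]; exact le_max_right _ _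

theorem mul_levelTime (hc : 0 < c) (hk : c * a ≤ k) : c * levelTime c a k = k := by
  rw [levelTime, max_eq_right (by rwa [le_div_iff₀' hc]), mul_div_cancel₀ _ hc.ne']

end levelTime

/-- `A` is the set of points lying below the last time `t = levelTime c a #A` at which the
counting function `u ↦ #{i | x i ≤ u}` meets the line `u ↦ c * u` on `[a, 1]`. -/
def IsLastCrossing [Fintype ι] (c a : ℝ) (x : ι → ℝ) (A : Finset ι) : Prop :=
  (∀ i, i ∈ A ↔ x i ≤ levelTime c a #A) ∧
    ∀ u, levelTime c a #A < u → u ≤ 1 → (countLE univ x u : ℝ) < c * u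

section IsLastCrossing

variable [Fintype ι] {c a : ℝ} {x : ι → ℝ}

theorem exists_isLastCrossing (hc : 0 < c) (hcard : (Fintype.card ι : ℝ) ≤ c) (ha1 : a ≤ 1)
    {s : ℝ} (hs : s ∈ Set.Icc a 1) (hxs : c * s ≤ countLE univ x s) :
    ∃ A, c * a ≤ #A ∧ IsLastCrossing c a x A := by
  classical
  -- `k` is the largest count reached on `[a, 1]` by a point on or above the line
  let P (k : ℕ) : Prop := ∃ u ∈ Set.Icc a 1, c * u ≤ countLE univ x u ∧ countLE univ x u = k
  set k := Nat.findGreatest P (Fintype.card ι)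
  have le_k : ∀ u ∈ Set.Icc a 1, c * u ≤ countLE univ x u → countLE univ x u ≤ k :=
    fun u hu h => Nat.le_findGreatest countLE_le_card ⟨u, hu, h, rfl⟩
  obtain ⟨u₀, hu₀, hcu₀, hku₀⟩ : P k := Nat.findGreatest_spec countLE_le_card ⟨s, hs, hxs, rfl⟩
  set t := levelTime c a k
  have hak : c * a ≤ k := by
    rw [← hku₀]; exact (mul_le_mul_of_nonneg_left hu₀.1 hc.le).trans hcu₀
  have hct : c * t = k := mul_levelTime hc hak
  have ht : t ∈ Set.Icc a 1 := ⟨le_levelTime, levelTime_le_one hc ha1 <|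
    (Nat.cast_le.2 (hku₀ ▸ countLE_le_card)).trans (by simpa using hcard)⟩
  have hkt : countLE univ x t = k := by
    have hu₀t : u₀ ≤ t := le_of_mul_le_mul_left (by rw [hct, ← hku₀]; exact hcu₀) hc
    have hk_le : k ≤ countLE univ x t := hku₀ ▸ countLE_mono _ _ hu₀t
    exact le_antisymm (le_k t ht (by rw [hct]; exact_mod_cast hk_le)) hk_le
  have hcard_t : #(univ.filter (x · ≤ t)) = k := hkt
  refine ⟨univ.filter (x · ≤ t), hcard_t ▸ hak, fun i => by simp [hcard_t, t], fun u htu hu1 => ?_⟩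
  rw [hcard_t] at htu
  by_contra! hle
  have hku : (countLE univ x u : ℝ) ≤ k := by exact_mod_cast le_k u ⟨ht.1.trans htu.le, hu1⟩ hle
  have : c * t < c * u := by gcongr
  linarith

theorem IsLastCrossing.countLE_eq {A : Finset ι} (h : IsLastCrossing c a x A) :
    countLE univ x (levelTime c a #A) = #A :=
  congr_arg card (by ext i; simp [h.1 i])

theorem IsLastCrossing.unique (hc : 0 < c) (hcard : (Fintype.card ι : ℝ) ≤ c) (ha1 : a ≤ 1)
    {A B : Finset ι} (hA : IsLastCrossing c a x A) (hB : IsLastCrossing c a x B)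
    (hcA : c * a ≤ #A) (hcB : c * a ≤ #B) : A = B := by
  -- at a strictly later level time `t' = #B / c` the count would be `#B = c t'`, on the line
  have crossing_before : ∀ {A B : Finset ι}, IsLastCrossing c a x A → IsLastCrossing c a x B →
      c * a ≤ #B → ¬ levelTime c a #A < levelTime c a #B := fun {A B} hA hB hcB hlt => by
    have := hA.2 _ hlt (levelTime_le_one hc ha1 ((Nat.cast_le.2 (card_le_univ B)).trans hcard))
    rw [hB.countLE_eq, mul_levelTime hc hcB] at this
    exact this.false
  have heq : levelTime c a #A = levelTime c a #B :=
    le_antisymm (not_lt.1 (crossing_before hB hA hcA)) (not_lt.1 (crossing_before hA hB hcB))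
  ext i
  rw [hA.1, hB.1, heq]

end IsLastCrossing

def Escapes [Fintype ι] [DecidableEq ι] (c a : ℝ) (A : Finset ι) (x : ι → ℝ) : Prop :=
  ∀ i ∉ A, levelTime c a #A < x i ∧ (x i ≤ 1 → ((#A + countLE Aᶜ x (x i) : ℕ) : ℝ) < c * x i)

/-- Moving the points of `J ⊆ A` down to `a` splits "`A` is the last crossing set" into a
condition on the coordinates in `A \ J` and one (`Escapes`) on the coordinates outside `A`. -/
theorem isLastCrossing_piecewise_iff [Fintype ι] [DecidableEq ι] {c a : ℝ} (hc : 0 < c)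
    {J A : Finset ι} (hJA : J ⊆ A) (x : ι → ℝ) :
    IsLastCrossing c a (J.piecewise (fun _ => a) x) A ↔
      (∀ i ∈ A \ J, x i ≤ levelTime c a #A) ∧ Escapes c a A x := by
  set y := J.piecewise (fun _ => a) x
  set t := levelTime c a #A
  have hmem : (∀ i, i ∈ A ↔ y i ≤ t) ↔ (∀ i ∈ A \ J, x i ≤ t) ∧ ∀ i ∉ A, t < x i := by
    refine ⟨fun h => ⟨fun i hi => ?_, fun i hi => ?_⟩, fun ⟨hin, hout⟩ i => ?_⟩
    · obtain ⟨hiA, hiJ⟩ := mem_sdiff.1 hi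
      simpa [y, hiJ] using (h i).1 hiA
    · have hiJ : i ∉ J := fun hiJ => hi (hJA hiJ)
      simpa [y, hiJ] using (h i).not.1 hi
    · by_cases hiJ : i ∈ J
      · simpa [y, hiJ, hJA hiJ] using le_levelTime
      · by_cases hiA : i ∈ A
        · simpa [y, hiJ, hiA] using hin i (mem_sdiff.2 ⟨hiA, hiJ⟩)
        · simpa [y, hiJ, hiA] using hout i hiA
  have hcount (h : ∀ i, i ∈ A ↔ y i ≤ t) (u : ℝ) (htu : t ≤ u) :
      countLE univ y u = #A + countLE Aᶜ x u := by
    rw [← union_compl A, countLE_union disjoint_compl_right,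
      countLE_eq_card fun i hi => ((h i).1 hi).trans htu]
    congr 1
    exact countLE_congr fun i hi =>
      Finset.piecewise_eq_of_notMem _ _ _ fun hiJ => mem_compl.1 hi (hJA hiJ)
  rw [IsLastCrossing, hmem]
  constructor
  · rintro ⟨⟨hin, hout⟩, hafter⟩
    refine ⟨hin, fun i hi => ⟨hout i hi, fun hi1 => ?_⟩⟩
    rw [← hcount (hmem.2 ⟨hin, hout⟩) _ (hout i hi).le]
    exact hafter _ (hout i hi) hi1
  · rintro ⟨hin, hesc⟩
    have hout i (hi : i ∉ A) : t < x i := (hesc i hi).1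
    refine ⟨⟨hin, hout⟩, fun u htu hu1 => ?_⟩
    rw [hcount (hmem.2 ⟨hin, hout⟩) _ htu.le]
    exact (forall_add_countLE_lt_mul_iff hc (natCast_le_mul_levelTime hc)
      fun i hi => hout i (mem_compl.1 hi)).2 (fun i hi => (hesc i (mem_compl.1 hi)).2) u htu hu1

theorem sum_add_pow_card_mul_le [Fintype ι] [DecidableEq ι] (𝒜 : Finset (Finset ι))
    (T p : Finset ι → ℝ) {β : ℝ} (hβ : 0 ≤ β)
    (h : ∀ J, ∑ A ∈ 𝒜 with J ⊆ A, T A ^ #(A \ J) * p A ≤ 1) :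
    ∑ A ∈ 𝒜, (T A + β) ^ #A * p A ≤ (β + 1) ^ Fintype.card ι := by
  calc ∑ A ∈ 𝒜, (T A + β) ^ #A * p A
      = ∑ A ∈ 𝒜, ∑ J ∈ A.powerset, β ^ #J * (T A ^ #(A \ J) * p A) := by
        refine sum_congr rfl fun A _ => ?_
        rw [add_comm, ← sum_pow_mul_eq_add_pow, sum_mul]
        refine sum_congr rfl fun J hJ => ?_
        rw [card_sdiff_of_subset (mem_powerset.1 hJ)]
        ring
    _ = ∑ J, ∑ A ∈ 𝒜 with J ⊆ A, β ^ #J * (T A ^ #(A \ J) * p A) :=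
        sum_comm' fun A J => by simp [and_comm]
    _ ≤ ∑ J : Finset ι, β ^ #J * 1 := by
        gcongr with J
        rw [← mul_sum]
        gcongr
        exact h J
    _ = (β + 1) ^ Fintype.card ι := by
        simp_rw [← Fintype.sum_pow_mul_eq_add_pow, one_pow]

theorem monotoneOn_mul_log_one_add_div {β : ℝ} (hβ : 0 ≤ β) :
    MonotoneOn (fun s => s * Real.log (1 + β / s)) (Set.Ioi 0) := by
  intro s (hs : 0 < s) t (ht : 0 < t) hst
  -- Bernoulli: `1 + β / s = 1 + (t / s) * (β / t) ≤ (1 + β / t) ^ (t / s)`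
  have hbernoulli : 1 + β / s ≤ (1 + β / t) ^ (t / s) := by
    convert one_add_mul_self_le_rpow_one_add (by linarith [div_nonneg hβ ht.le] :
      (-1 : ℝ) ≤ β / t) ((one_le_div hs).2 hst) using 2
    field_simp
  have hlog := Real.log_le_log (by positivity) hbernoulli
  rw [Real.log_rpow (by positivity)] at hlog
  calc s * Real.log (1 + β / s) ≤ s * (t / s * Real.log (1 + β / t)) := by gcongr
    _ = t * Real.log (1 + β / t) := by field_simp

theorem exp_mul_log_mul_pow_le {c a t lam : ℝ} {k : ℕ} (hc : 0 ≤ c) (hlam : 1 ≤ lam)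
    (ha : 0 < a) (hat : a ≤ t) (hk : c * t = k) :
    Real.exp (c * a * Real.log lam) * t ^ k ≤ (t + a * (lam - 1)) ^ k := by
  have ht : 0 < t := ha.trans_le hat
  have hβ : 0 ≤ a * (lam - 1) := mul_nonneg ha.le (by linarith)
  have hexp : c * a * Real.log lam ≤ k * Real.log (1 + a * (lam - 1) / t) := by
    calc c * a * Real.log lam = c * (a * Real.log (1 + a * (lam - 1) / a)) := by
          field_simp; ring_nf
      _ ≤ c * (t * Real.log (1 + a * (lam - 1) / t)) := by
          exact mul_le_mul_of_nonneg_left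
            (monotoneOn_mul_log_one_add_div hβ ha (ha.trans_le hat) hat) hc
      _ = k * Real.log (1 + a * (lam - 1) / t) := by rw [← hk]; ring
  calc Real.exp (c * a * Real.log lam) * t ^ k
      ≤ Real.exp (k * Real.log (1 + a * (lam - 1) / t)) * t ^ k := by gcongr
    _ = (t + a * (lam - 1)) ^ k := by
        rw [← Real.log_pow, Real.exp_log (by positivity), ← mul_pow]
        congr 1
        field_simp

theorem sum_levelTime_pow_mul_le [Fintype ι] [DecidableEq ι] {c a lam : ℝ} (hc : 0 < c)
    (hlam : 1 ≤ lam) (ha : 0 < a) {𝒜 : Finset (Finset ι)} (h𝒜 : ∀ A ∈ 𝒜, c * a ≤ #A)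
    {p : Finset ι → ℝ} (hp : ∀ A, 0 ≤ p A)
    (h : ∀ J, ∑ A ∈ 𝒜 with J ⊆ A, levelTime c a #A ^ #(A \ J) * p A ≤ 1) :
    ∑ A ∈ 𝒜, levelTime c a #A ^ #A * p A ≤
      Real.exp (-(c * a * Real.log lam)) * (a * (lam - 1) + 1) ^ Fintype.card ι := by
  have hβ : 0 ≤ a * (lam - 1) := mul_nonneg ha.le (by linarith)
  calc ∑ A ∈ 𝒜, levelTime c a #A ^ #A * p A
      ≤ ∑ A ∈ 𝒜, Real.exp (-(c * a * Real.log lam)) *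
          ((levelTime c a #A + a * (lam - 1)) ^ #A * p A) := by
        refine sum_le_sum fun A hA => ?_
        rw [← mul_assoc]
        refine mul_le_mul_of_nonneg_right ?_ (hp A)
        rw [Real.exp_neg, ← div_eq_inv_mul, le_div_iff₀' (Real.exp_pos _)]
        exact exp_mul_log_mul_pow_le hc.le hlam ha le_levelTime (mul_levelTime hc (h𝒜 A hA))
    _ ≤ Real.exp (-(c * a * Real.log lam)) * (a * (lam - 1) + 1) ^ Fintype.card ι := by
        rw [← mul_sum]
        gcongr
        exact sum_add_pow_card_mul_le 𝒜 _ p hβ h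

section Probability

variable {Ω : Type*} [Fintype ι] [DecidableEq ι] {c a : ℝ} {A : Finset ι} {U : ι → Ω → ℝ}

theorem measurableSet_escapes {m : MeasurableSpace Ω}
    (hU : ∀ i ∉ A, Measurable (U i)) : MeasurableSet {ω | Escapes c a A (U · ω)} := by
  have hcount (i) (hi : i ∉ A) : Measurable fun ω => (countLE Aᶜ (U · ω) (U i ω) : ℝ) := by
    simp_rw [countLE, natCast_card_filter]
    exact Finset.measurable_sum _ fun j hj =>
      Measurable.ite (measurableSet_le (hU j (mem_compl.1 hj)) (hU i hi)) measurable_const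
        measurable_const
  simp only [Escapes, Set.ofPred_forall, Set.ofPred_and]
  refine .iInter fun i => .iInter fun hi => ?_
  refine (measurableSet_lt measurable_const (hU i hi)).inter <|
    (measurableSet_le (hU i hi) measurable_const).imp (measurableSet_lt ?_ ((hU i hi).const_mul c))
  push_cast
  exact measurable_const.add (hcount i hi)

theorem setOf_isLastCrossing_piecewise (hc : 0 < c) {J : Finset ι} (hJA : J ⊆ A) :
    {ω | IsLastCrossing c a (J.piecewise (fun _ => a) (U · ω)) A} =
      (⋂ i ∈ A \ J, U i ⁻¹' Set.Iic (levelTime c a #A)) ∩ {ω | Escapes c a A (U · ω)} := by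
  ext ω
  simp [isLastCrossing_piecewise_iff hc hJA]

variable [MeasurableSpace Ω] {μ : Measure Ω}

theorem measure_preimage_Iic_of_map_eq_uniform {X : Ω → ℝ} (hX : Measurable X)
    (hlaw : μ.map X = volume.restrict (Set.Ioo 0 1)) {r : ℝ} (hr1 : r ≤ 1) :
    μ (X ⁻¹' Set.Iic r) = ENNReal.ofReal r := by
  have : Set.Iic r ∩ Set.Icc 0 1 = Set.Icc 0 r := by ext; simp; grind
  rw [← Measure.map_apply hX measurableSet_Iic, hlaw,
    Measure.restrict_congr_set Ioo_ae_eq_Icc, Measure.restrict_apply measurableSet_Iic, this,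
    Real.volume_Icc, sub_zero]

theorem measureReal_isLastCrossing_piecewise (hc : 0 < c) (hcard : (Fintype.card ι : ℝ) ≤ c)
    (ha : 0 ≤ a) (ha1 : a ≤ 1) (hmeas : ∀ i, Measurable (U i)) (hindep : iIndepFun U μ)
    (hlaw : ∀ i, μ.map (U i) = volume.restrict (Set.Ioo 0 1)) {J : Finset ι} (hJA : J ⊆ A) :
    μ.real {ω | IsLastCrossing c a (J.piecewise (fun _ => a) (U · ω)) A} =
      levelTime c a #A ^ #(A \ J) * μ.real {ω | Escapes c a A (U · ω)} := by
  set t := levelTime c a #A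
  have ht1 : t ≤ 1 := levelTime_le_one hc ha1 ((Nat.cast_le.2 (card_le_univ A)).trans hcard)
  let m (S : Finset ι) : MeasurableSpace Ω :=
    ⨆ i ∈ (S : Set ι), MeasurableSpace.comap (U i) Real.measurableSpace
  have hm {S : Finset ι} {i : ι} (hi : i ∈ S) : Measurable[m S] (U i) :=
    measurable_iff_comap_le.2 <| le_iSup₂ (f := fun j (_ : j ∈ (S : Set ι)) =>
      MeasurableSpace.comap (U j) Real.measurableSpace) i (mem_coe.2 hi)
  have hind : Indep (m (A \ J)) (m Aᶜ) μ :=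
    indep_iSup_of_disjoint (fun i => (hmeas i).comap_le) ((iIndepFun_iff_iIndep _ _ _).1 hindep)
      (disjoint_coe.2 (disjoint_compl_right.mono_left sdiff_subset))
  rw [measureReal_def, measureReal_def, setOf_isLastCrossing_piecewise hc hJA,
    (Indep_iff _ _ μ).1 hind _ _
      (Finset.measurableSet_biInter _ fun i hi => hm hi measurableSet_Iic)
      (measurableSet_escapes fun i hi => hm (mem_compl.2 hi)),
    hindep.measure_inter_preimage_eq_mul _ fun _ _ => measurableSet_Iic,
    Finset.prod_congr rfl fun i _ => measure_preimage_Iic_of_map_eq_uniform (hmeas i) (hlaw i) ht1,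
    prod_const, ENNReal.toReal_mul, ENNReal.toReal_pow,
    ENNReal.toReal_ofReal (ha.trans le_levelTime)]

/-- For fixed `J`, the events "`A` is the last crossing set once the points of `J` are moved
to `a`" are disjoint in `A`. -/
theorem sum_levelTime_pow_mul_measureReal_escapes_le_one [IsProbabilityMeasure μ] (hc : 0 < c)
    (hcard : (Fintype.card ι : ℝ) ≤ c) (ha : 0 ≤ a) (ha1 : a ≤ 1) (hmeas : ∀ i, Measurable (U i))
    (hindep : iIndepFun U μ) (hlaw : ∀ i, μ.map (U i) = volume.restrict (Set.Ioo 0 1))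
    {𝒜 : Finset (Finset ι)} (h𝒜 : ∀ A ∈ 𝒜, c * a ≤ #A) (J : Finset ι) :
    ∑ A ∈ 𝒜 with J ⊆ A, levelTime c a #A ^ #(A \ J) * μ.real {ω | Escapes c a A (U · ω)} ≤ 1 := by
  let D (A : Finset ι) : Set Ω := {ω | IsLastCrossing c a (J.piecewise (fun _ => a) (U · ω)) A}
  have hdisj : Set.PairwiseDisjoint ↑(𝒜.filter (J ⊆ ·)) D := fun A hA B hB hAB =>
    Set.disjoint_left.2 fun ω hωA hωB => hAB <| IsLastCrossing.unique hc hcard ha1 hωA hωB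
      (h𝒜 A (mem_filter.1 hA).1) (h𝒜 B (mem_filter.1 hB).1)
  calc ∑ A ∈ 𝒜 with J ⊆ A, levelTime c a #A ^ #(A \ J) * μ.real {ω | Escapes c a A (U · ω)}
      = μ.real (⋃ A ∈ 𝒜.filter (J ⊆ ·), D A) := by
        rw [measureReal_biUnion_finset hdisj fun A hA => ?_]
        · exact (sum_congr rfl fun A hA => measureReal_isLastCrossing_piecewise hc hcard ha ha1
            hmeas hindep hlaw (mem_filter.1 hA).2).symm
        rw [show D A = _ from setOf_isLastCrossing_piecewise hc (mem_filter.1 hA).2]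
        exact (Finset.measurableSet_biInter _ fun i _ => hmeas i measurableSet_Iic).inter
          (measurableSet_escapes fun i _ => hmeas i)
    _ ≤ 1 := measureReal_le_one

theorem measureReal_exists_isLastCrossing_le [IsProbabilityMeasure μ] {lam : ℝ} (hc : 0 < c)
    (hcard : (Fintype.card ι : ℝ) ≤ c) (hlam : 1 ≤ lam) (ha : 0 < a) (ha1 : a ≤ 1)
    (hmeas : ∀ i, Measurable (U i)) (hindep : iIndepFun U μ)
    (hlaw : ∀ i, μ.map (U i) = volume.restrict (Set.Ioo 0 1)) :
    μ.real {ω | ∃ A, c * a ≤ #A ∧ IsLastCrossing c a (U · ω) A} ≤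
      Real.exp (-(c * a * Real.log lam)) * (a * (lam - 1) + 1) ^ Fintype.card ι := by
  set 𝒜 := (univ : Finset (Finset ι)).filter (fun A => c * a ≤ #A)
  have hunion : {ω | ∃ A, c * a ≤ #A ∧ IsLastCrossing c a (U · ω) A} =
      ⋃ A ∈ 𝒜, {ω | IsLastCrossing c a (U · ω) A} := by
    ext ω
    simp [𝒜]
  calc _ ≤ ∑ A ∈ 𝒜, μ.real {ω | IsLastCrossing c a (U · ω) A} :=
        hunion ▸ measureReal_biUnion_finset_le _ _
    _ = ∑ A ∈ 𝒜, levelTime c a #A ^ #A * μ.real {ω | Escapes c a A (U · ω)} :=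
        sum_congr rfl fun A _ => by
          simpa using measureReal_isLastCrossing_piecewise hc hcard ha.le ha1 hmeas hindep hlaw
            (empty_subset A)
    _ ≤ _ := sum_levelTime_pow_mul_le hc hlam ha (fun A hA => (mem_filter.1 hA).2)
          (fun _ => measureReal_nonneg) (sum_levelTime_pow_mul_measureReal_escapes_le_one hc hcard
            ha.le ha1 hmeas hindep hlaw fun A hA => (mem_filter.1 hA).2)

end Probability

theorem exists_forall_countLE_div_le [Fintype ι] (x : ι → ℝ) {a : ℝ} (ha : 0 < a) (ha1 : a ≤ 1) :
    ∃ s ∈ Set.Icc a 1, ∀ u ∈ Set.Icc a 1, (countLE univ x u : ℝ) / u ≤ countLE univ x s / s := by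
  classical
  -- between consecutive points of `{a} ∪ {x i}` the count is constant, so `count / u` decreases
  set S := (insert a (Finset.univ.image x)).filter (· ∈ Set.Icc a 1)
  have haS : a ∈ S := mem_filter.2 ⟨Finset.mem_insert_self _ _, le_rfl, ha1⟩
  obtain ⟨s, hsS, hsmax⟩ := S.exists_max_image (fun u => (countLE univ x u : ℝ) / u) ⟨a, haS⟩
  refine ⟨s, (mem_filter.1 hsS).2, fun u hu => ?_⟩
  have haSu : a ∈ S.filter (· ≤ u) := mem_filter.2 ⟨haS, hu.1⟩
  set v := (S.filter (· ≤ u)).max' ⟨a, haSu⟩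
  obtain ⟨hvS, hvu⟩ := mem_filter.1 (max'_mem _ ⟨a, haSu⟩)
  have hav : a ≤ v := le_max' _ a haSu
  have hcount : countLE univ x v = countLE univ x u := by
    refine le_antisymm (countLE_mono _ _ hvu) (card_le_card fun i hi => ?_)
    simp only [mem_filter, Finset.mem_univ, true_and] at hi ⊢
    rcases le_or_gt (x i) a with hia | hia
    · exact hia.trans hav
    · have hxS : x i ∈ S := mem_filter.2 ⟨Finset.mem_insert_of_mem
        (Finset.mem_image_of_mem x (Finset.mem_univ i)), hia.le, hi.trans hu.2⟩
      exact le_max' _ _ (mem_filter.2 ⟨hxS, hi⟩)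
  calc (countLE univ x u : ℝ) / u = countLE univ x v / u := by rw [hcount]
    _ ≤ countLE univ x v / v := div_le_div_of_nonneg_left (by positivity) (ha.trans_le hav) hvu
    _ ≤ countLE univ x s / s := hsmax v hvS

theorem exists_isLastCrossing_of_le_iSup_empCDF {n : ℕ} (hn : 0 < n) {lam a : ℝ} (hlam : 1 ≤ lam)
    (ha : 0 < a) (ha1 : a ≤ 1) {x : Fin n → ℝ} (h : lam ≤ ⨆ u : Set.Icc a 1, empCDF n x u / u) :
    ∃ A, lam * n * a ≤ #A ∧ IsLastCrossing (lam * n) a x A := by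
  obtain ⟨s, hs, hmax⟩ := exists_forall_countLE_div_le x ha ha1
  have : Nonempty (Set.Icc a 1) := ⟨⟨a, le_rfl, ha1⟩⟩
  have hle : lam ≤ countLE univ x s / s / n := h.trans <| ciSup_le fun u => by
    rw [empCDF, div_right_comm]
    exact div_le_div_of_nonneg_right (hmax u u.2) n.cast_nonneg
  have hn' : (0 : ℝ) < n := Nat.cast_pos.2 hn
  rw [div_div, le_div_iff₀ (mul_pos (ha.trans_le hs.1) hn')] at hle
  refine exists_isLastCrossing (mul_pos (by linarith) hn') ?_ ha1 hs (by linarith)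
  simpa using le_mul_of_one_le_left hn'.le hlam

end Wellner

theorem exp_neg_mul_log_mul_pow_le_exp_neg_hfun (n : ℕ) {lam a : ℝ} (hlam : 1 ≤ lam)
    (ha : 0 ≤ a) :
    Real.exp (-(lam * n * a * Real.log lam)) * (a * (lam - 1) + 1) ^ n ≤
      Real.exp (-(n * a * hfun lam)) := by
  have hβ : 0 ≤ a * (lam - 1) + 1 := by nlinarith
  calc _ ≤ Real.exp (-(lam * n * a * Real.log lam)) * Real.exp (a * (lam - 1)) ^ n := by
        gcongr
        exact Real.add_one_le_exp _
    _ = Real.exp (-(n * a * hfun lam)) := by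
        rw [← Real.exp_nat_mul, ← Real.exp_add, hfun]
        ring_nf

open Wellner in
/-- Wellner's inequality (i): for i.i.d. Uniform(0,1) variables,
`Pr(sup_{a ≤ u ≤ 1} Gₙ(u)/u ≥ λ) ≤ exp(-n a h(λ))`. -/
theorem wellner_i {Ω : Type*} [MeasurableSpace Ω] (μ : Measure Ω)
    [IsProbabilityMeasure μ] (n : ℕ) (U : Fin n → Ω → ℝ)
    (hmeas : ∀ i, Measurable (U i))
    (hindep : iIndepFun U μ)
    (hlaw : ∀ i, Measure.map (U i) μ = volume.restrict (Set.Ioo (0:ℝ) 1))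
    (lam a : ℝ) (hlam : 1 ≤ lam) (ha : 0 < a) (ha1 : a ≤ 1) :
    (μ {ω | lam ≤ ⨆ u : Set.Icc a 1, empCDF n (fun i => U i ω) u / u}).toReal ≤
      Real.exp (-(n * a * hfun lam)) := by
  rw [← measureReal_def]
  rcases n.eq_zero_or_pos with rfl | hn
  · simp
  have hn' : (0 : ℝ) < n := Nat.cast_pos.2 hn
  calc _ ≤ μ.real {ω | ∃ A, lam * n * a ≤ #A ∧ IsLastCrossing (lam * n) a (U · ω) A} :=
        measureReal_mono fun ω hω => exists_isLastCrossing_of_le_iSup_empCDF hn hlam ha ha1 hω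
    _ ≤ Real.exp (-(lam * n * a * Real.log lam)) * (a * (lam - 1) + 1) ^ n := by
        simpa using measureReal_exists_isLastCrossing_le (mul_pos (by linarith) hn')
          (by simpa using le_mul_of_one_le_left hn'.le hlam) hlam ha ha1 hmeas hindep hlaw
    _ ≤ Real.exp (-(n * a * hfun lam)) := exp_neg_mul_log_mul_pow_le_exp_neg_hfun n hlam ha.le
end
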